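/- Let d ≥ 2, 0 < β ≤ 1, Q > 0, and K ≥ 1. Define φ_K(x) = ∑_{j=1}^K 2 a_j^x 3^{-d(j-1)} for x with fixed binary digits (a_j^x). If |f(x) − f(y)| ≤ Q ‖x − y‖_∞^β for all x, y ∈ [0,1]^d, then there exists a function g: C → ℝ with |g(x) − g(y)| ≤ 2^β Q |x−y|^{β log 2/(d log 3)} on C and such that |f(x) − g(∑_{p=1}^d 3^{-p} φ_K(x_p))| ≤ Q · 2^{-β(K−4)} for all x = (x_1,...,x_d) ∈ [0,1]^d. -/

import Mathlib

/-!
The map `Φ_K x = ∑_p 3^{-p} φ_K(x_p)` writes the first `K` binary digits of the coordinates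
`x_1, …, x_d`, interleaved, as ternary digits `0, 2`. If the ternary digits of `Φ_K x` and
`Φ_K y` first differ at place `n < dK`, then `|Φ_K x - Φ_K y| ≥ 3^{-(n+1)}`, while every
coordinate of `x` and `y` shares its first `⌊n/d⌋` binary digits; since `(3^{-d})^c = 1/2` for
`c = log 2 / (d log 3)`, this gives `‖x - y‖ ≤ 2 |Φ_K x - Φ_K y|^c`. If `Φ_K x = Φ_K y`, all `K`
digits agree and `‖x - y‖ ≤ 2^{-K}`. So `f` is `(2^β Q, βc)`-Hölder across distinct fibres of
`Φ_K`; picking one point in each fibre and extending à la McShane gives `g`, and on a fibre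
`f` varies by at most `Q 2^{-βK}`.
-/

open Set Filter Topology MeasureTheory

noncomputable section

/-- The unit cube `[0,1]^d`. -/
def cube (d : ℕ) : Set (Fin d → ℝ) := {x | ∀ p, x p ∈ Set.Icc (0:ℝ) 1}

/-- The Cantor middle-thirds set: reals admitting a ternary expansion with digits in `{0,2}`. -/
def CantorSet : Set ℝ :=
  {y | ∃ t : ℕ → ℕ, (∀ j, t j = 0 ∨ t j = 2) ∧ y = ∑' j : ℕ, (t j : ℝ) / 3 ^ (j + 1)}

/-- `a` assigns to each `x ∈ [0,1]` a fixed binary expansion (`a x j` is the digit `a_{j+1}^x`). -/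
def IsBinaryExp (a : ℝ → ℕ → ℕ) : Prop :=
  ∀ x ∈ Set.Icc (0:ℝ) 1, (∀ j, a x j ≤ 1) ∧ x = ∑' j : ℕ, (a x j : ℝ) / 2 ^ (j + 1)

/-- `φ(x) = ∑_{j≥1} 2 a_j^x 3^{-d(j-1)}`. -/
def phiFun (d : ℕ) (a : ℝ → ℕ → ℕ) (x : ℝ) : ℝ := ∑' j : ℕ, (2 * a x j : ℝ) / 3 ^ (d * j)

/-- `Φ(x_1,…,x_d) = ∑_{p=1}^d 3^{-p} φ(x_p)`. -/
def PhiFun (d : ℕ) (a : ℝ → ℕ → ℕ) (x : Fin d → ℝ) : ℝ :=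
  ∑ p : Fin d, phiFun d a (x p) / 3 ^ ((p : ℕ) + 1)

/-- The truncated interior function `φ_K(x) = ∑_{j=1}^K 2 a_j^x 3^{-d(j-1)}`. -/
def phiTrunc (d K : ℕ) (a : ℝ → ℕ → ℕ) (x : ℝ) : ℝ :=
  ∑ j ∈ Finset.range K, (2 * a x j : ℝ) / 3 ^ (d * j)

section HolderExtension

open Metric

variable {X : Type*} [PseudoMetricSpace X] {C α : ℝ}

theorem exists_holder_extension_real (hC : 0 ≤ C) (hα₀ : 0 < α) (hα₁ : α ≤ 1) {f : X → ℝ}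
    {s : Set X} (hf : ∀ x ∈ s, ∀ y ∈ s, dist (f x) (f y) ≤ C * dist x y ^ α) :
    ∃ g : X → ℝ, (∀ x y, dist (g x) (g y) ≤ C * dist x y ^ α) ∧ EqOn f g s := by
  -- Hölder for `dist` is Lipschitz for the snowflake metric `dist ^ α`, a metric since `α ≤ 1`.
  lift C to NNReal using hC
  let e : X ≃ Snowflaking X α hα₀ hα₁ := Snowflaking.toSnowflaking
  obtain ⟨g, hg, hfg⟩ := LipschitzOnWith.extend_real (f := f ∘ e.symm) (s := e '' s) (K := C)
    (LipschitzOnWith.of_dist_le_mul <| by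
      rintro _ ⟨x, hx, rfl⟩ _ ⟨y, hy, rfl⟩
      exact hf x hx y hy)
  exact ⟨g ∘ e, fun x y => hg.dist_le_mul (e x) (e y), fun x hx => hfg (mem_image_of_mem e hx)⟩

theorem exists_holder_agreeing_on_fibers {A : Type*} (hC : 0 ≤ C) (hα₀ : 0 < α) (hα₁ : α ≤ 1)
    (Φ : A → X) (f : A → ℝ) (s : Set A)
    (hf : ∀ x ∈ s, ∀ y ∈ s, Φ x ≠ Φ y → dist (f x) (f y) ≤ C * dist (Φ x) (Φ y) ^ α) :
    ∃ g : X → ℝ, (∀ u v, dist (g u) (g v) ≤ C * dist u v ^ α) ∧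
      ∀ x ∈ s, ∃ y ∈ s, Φ y = Φ x ∧ g (Φ x) = f y := by
  classical
  let F : X → ℝ := fun u => if h : ∃ x ∈ s, Φ x = u then f h.choose else 0
  have hF : ∀ x ∈ s, (∃ y ∈ s, Φ x = Φ y ∧ F (Φ x) = f y) := by
    intro x hx
    have h : ∃ y ∈ s, Φ y = Φ x := ⟨x, hx, rfl⟩
    exact ⟨h.choose, h.choose_spec.1, h.choose_spec.2.symm, dif_pos h⟩
  obtain ⟨g, hg, hFg⟩ := exists_holder_extension_real hC hα₀ hα₁ (f := F) (s := Φ '' s) <| by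
    rintro _ ⟨x, hx, rfl⟩ _ ⟨y, hy, rfl⟩
    obtain ⟨x', hx', hxx', hFx⟩ := hF x hx
    obtain ⟨y', hy', hyy', hFy⟩ := hF y hy
    by_cases hxy : Φ x = Φ y
    · simp only [hxy, dist_self]
      positivity
    · rw [hFx, hFy, hxx', hyy']
      exact hf x' hx' y' hy' (hxx' ▸ hyy' ▸ hxy)
  refine ⟨g, hg, fun x hx => ?_⟩
  obtain ⟨y, hy, hxy, hFx⟩ := hF x hx
  exact ⟨y, hy, hxy.symm, (hFg (mem_image_of_mem Φ hx)).symm.trans hFx⟩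

end HolderExtension

section Expansions

lemma summable_binary {A : ℕ → ℕ} (hA : ∀ j, A j ≤ 1) :
    Summable fun j => (A j : ℝ) / 2 ^ (j + 1) :=
  (summable_geometric_two' 1).of_nonneg_of_le (fun j => by positivity) fun j => by
    rw [div_div, ← pow_succ']
    gcongr
    exact_mod_cast hA j

lemma binary_tail_mem_Icc {A : ℕ → ℕ} (hA : ∀ j, A j ≤ 1) (J : ℕ) :
    ∑' i, (A (i + J) : ℝ) / 2 ^ (i + J + 1) ∈ Icc 0 (1 / 2 ^ J) := by
  refine ⟨tsum_nonneg fun i => by positivity, ?_⟩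
  calc ∑' i, (A (i + J) : ℝ) / 2 ^ (i + J + 1)
      ≤ ∑' i, 1 / 2 ^ J / 2 / 2 ^ i := by
        refine Summable.tsum_le_tsum (fun i => ?_) ((summable_nat_add_iff J).2 (summable_binary hA))
          (summable_geometric_two' _)
        calc (A (i + J) : ℝ) / 2 ^ (i + J + 1) ≤ 1 / 2 ^ (i + J + 1) := by
              gcongr; exact_mod_cast hA (i + J)
          _ = 1 / 2 ^ J / 2 / 2 ^ i := by ring
    _ = 1 / 2 ^ J := tsum_geometric_two' _

theorem abs_sub_le_of_binary_digits_eq {A B : ℕ → ℕ} (hA : ∀ j, A j ≤ 1) (hB : ∀ j, B j ≤ 1)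
    {J : ℕ} (h : ∀ j < J, A j = B j) :
    |∑' j, (A j : ℝ) / 2 ^ (j + 1) - ∑' j, (B j : ℝ) / 2 ^ (j + 1)| ≤ 1 / 2 ^ J := by
  rw [← (summable_binary hA).sum_add_tsum_nat_add J, ← (summable_binary hB).sum_add_tsum_nat_add J,
    Finset.sum_congr rfl fun j hj => by rw [h j (Finset.mem_range.1 hj)], add_sub_add_left_eq_sub]
  obtain ⟨hA0, hA1⟩ := binary_tail_mem_Icc hA J
  obtain ⟨hB0, hB1⟩ := binary_tail_mem_Icc hB J
  exact abs_sub_le_of_nonneg_of_le hA0 hA1 hB0 hB1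

lemma abs_sum_Ico_div_three_pow_le {u : ℕ → ℝ} (hu : ∀ m, |u m| ≤ 2) (a N : ℕ) :
    |∑ m ∈ Finset.Ico a N, u m / 3 ^ (m + 1)| ≤ 1 / 3 ^ a := by
  calc |∑ m ∈ Finset.Ico a N, u m / 3 ^ (m + 1)|
      ≤ ∑ m ∈ Finset.Ico a N, 2 / 3 * (1 / 3 : ℝ) ^ m := by
        refine (Finset.abs_sum_le_sum_abs _ _).trans (Finset.sum_le_sum fun m _ => ?_)
        rw [abs_div, abs_of_pos (by positivity : (0 : ℝ) < 3 ^ (m + 1)), div_pow, one_pow, pow_succ]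
        calc |u m| / (3 ^ m * 3) ≤ 2 / (3 ^ m * 3) := by gcongr; exact hu m
          _ = 2 / 3 * (1 / 3 ^ m) := by field_simp
    _ = 2 / 3 * ∑ m ∈ Finset.Ico a N, (1 / 3 : ℝ) ^ m := by rw [Finset.mul_sum]
    _ ≤ 2 / 3 * ((1 / 3) ^ a / (1 - 1 / 3)) := by
        gcongr; exact geom_sum_Ico_le_of_lt_one (by norm_num) (by norm_num)
    _ = 1 / 3 ^ a := by rw [div_pow, one_pow]; field_simp; norm_num

theorem one_div_three_pow_le_abs_sum {u : ℕ → ℝ} (hu : ∀ m, |u m| ≤ 2) {n N : ℕ} (hn : n < N)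
    (hlt : ∀ m < n, u m = 0) (hn2 : |u n| = 2) :
    1 / 3 ^ (n + 1) ≤ |∑ m ∈ Finset.range N, u m / 3 ^ (m + 1)| := by
  have hhead : ∑ m ∈ Finset.range n, u m / 3 ^ (m + 1) = 0 :=
    Finset.sum_eq_zero fun m hm => by rw [hlt m (Finset.mem_range.1 hm), zero_div]
  rw [← Finset.sum_range_add_sum_Ico _ hn.le, hhead, zero_add,
    Finset.sum_eq_sum_Ico_succ_bot hn]
  have htail := abs_sum_Ico_div_three_pow_le hu (n + 1) N
  have hlead : |u n / 3 ^ (n + 1)| = 2 / 3 ^ (n + 1) := by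
    rw [abs_div, hn2, abs_of_pos (by positivity)]
  have htwo : (2 : ℝ) / 3 ^ (n + 1) = 2 * (1 / 3 ^ (n + 1)) := by ring
  linarith [abs_sub_abs_le_abs_add (u n / 3 ^ (n + 1))
    (∑ m ∈ Finset.Ico (n + 1) N, u m / 3 ^ (m + 1))]

end Expansions

section Digits

lemma exists_lt_first_ne {β : Type*} {A B : ℕ → β} {N : ℕ} (h : ∃ m < N, A m ≠ B m) :
    ∃ n < N, A n ≠ B n ∧ ∀ m < n, A m = B m := by
  classical
  obtain ⟨hlt, hne⟩ := Nat.find_spec h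
  exact ⟨Nat.find h, hlt, hne, fun m hm => not_not.1 fun hm' => Nat.find_min h hm ⟨by omega, hm'⟩⟩

def PhiTrunc (d K : ℕ) (a : ℝ → ℕ → ℕ) (x : Fin d → ℝ) : ℝ :=
  ∑ p : Fin d, phiTrunc d K a (x p) / 3 ^ ((p : ℕ) + 1)

-- Place `m = j * d + p` carries twice the binary digit `a_{j+1}` of the coordinate `x_p`.
def interleavedDigit (d : ℕ) [NeZero d] (a : ℝ → ℕ → ℕ) (x : Fin d → ℝ) (m : ℕ) : ℕ :=
  2 * a (x (Fin.ofNat d m)) (m / d)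

lemma one_div_three_pow_rpow (d k : ℕ) (hd : d ≠ 0) :
    (1 / 3 ^ (d * k) : ℝ) ^ (Real.log 2 / (d * Real.log 3)) = 1 / 2 ^ k := by
  have hexp : Real.log 3 * ((d * k : ℕ) * (Real.log 2 / (d * Real.log 3))) = Real.log (2 ^ k) := by
    have : Real.log 3 ≠ 0 := by positivity
    rw [Real.log_pow]; push_cast; field_simp
  rw [Real.div_rpow zero_le_one (by positivity), Real.one_rpow, ← Real.rpow_natCast,
    ← Real.rpow_mul (by norm_num), Real.rpow_def_of_pos (by norm_num), hexp,
    Real.exp_log (by positivity)]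

variable {d K : ℕ} [NeZero d] {a : ℝ → ℕ → ℕ}

lemma interleavedDigit_mul_add (x : Fin d → ℝ) (j : ℕ) (p : Fin d) :
    interleavedDigit d a x (j * d + p) = 2 * a (x p) j := by
  have hp := (Nat.divModEquiv d).apply_symm_apply (j, p)
  simp only [Nat.divModEquiv_symm_apply, Nat.divModEquiv_apply, Prod.mk.injEq] at hp
  rw [interleavedDigit, hp.1, hp.2]

lemma PhiTrunc_eq_sum_interleavedDigit (x : Fin d → ℝ) :
    PhiTrunc d K a x =
      ∑ m ∈ Finset.range (d * K), (interleavedDigit d a x m : ℝ) / 3 ^ (m + 1) := by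
  symm
  rw [Finset.sum_equiv (Nat.divModEquiv d) (t := Finset.range K ×ˢ Finset.univ)
    (g := fun q => (2 * a (x q.2) q.1 : ℝ) / 3 ^ (q.1 * d + q.2 + 1))
    (fun m => by simp [Nat.div_lt_iff_lt_mul (Nat.pos_of_neZero d), mul_comm])
    (fun m _ => by simp [interleavedDigit, Nat.div_add_mod']),
    Finset.sum_product, Finset.sum_comm, PhiTrunc]
  refine Finset.sum_congr rfl fun p _ => ?_
  rw [phiTrunc, Finset.sum_div]
  refine Finset.sum_congr rfl fun j _ => ?_
  rw [div_div, ← pow_add, mul_comm d, add_assoc]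

variable (ha : IsBinaryExp a) {x y : Fin d → ℝ}
include ha

lemma interleavedDigit_eq_zero_or_eq_two (hx : x ∈ cube d) (m : ℕ) :
    interleavedDigit d a x m = 0 ∨ interleavedDigit d a x m = 2 := by
  have := (ha _ (hx (Fin.ofNat d m))).1 (m / d)
  rw [interleavedDigit]
  omega

variable (hx : x ∈ cube d) (hy : y ∈ cube d)
include hx hy

lemma one_div_three_pow_le_abs_PhiTrunc_sub {n : ℕ} (hn : n < d * K)
    (hlt : ∀ m < n, interleavedDigit d a x m = interleavedDigit d a y m)
    (hne : interleavedDigit d a x n ≠ interleavedDigit d a y n) :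
    1 / 3 ^ (n + 1) ≤ |PhiTrunc d K a x - PhiTrunc d K a y| := by
  have hdigit := fun m => interleavedDigit_eq_zero_or_eq_two ha hx m
  have hdigit' := fun m => interleavedDigit_eq_zero_or_eq_two ha hy m
  rw [PhiTrunc_eq_sum_interleavedDigit, PhiTrunc_eq_sum_interleavedDigit, ← Finset.sum_sub_distrib]
  simp_rw [← sub_div]
  refine one_div_three_pow_le_abs_sum (fun m => ?_) hn (fun m hm => by rw [hlt m hm, sub_self]) ?_
  · rcases hdigit m with h | h <;> rcases hdigit' m with h' | h' <;> norm_num [h, h']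
  · rcases hdigit n with h | h <;> rcases hdigit' n with h' | h' <;> simp_all

lemma norm_sub_le_of_interleavedDigit_eq {J : ℕ}
    (h : ∀ m < d * J, interleavedDigit d a x m = interleavedDigit d a y m) :
    ‖x - y‖ ≤ 1 / 2 ^ J := by
  refine (pi_norm_le_iff_of_nonneg (by positivity)).2 fun p => ?_
  rw [Pi.sub_apply, Real.norm_eq_abs, (ha _ (hx p)).2, (ha _ (hy p)).2]
  refine abs_sub_le_of_binary_digits_eq (ha _ (hx p)).1 (ha _ (hy p)).1 fun j hj => ?_
  have hjp : j * d + p < d * J := by nlinarith [p.2]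
  have := h _ hjp
  rw [interleavedDigit_mul_add, interleavedDigit_mul_add] at this
  omega

lemma norm_sub_le_of_PhiTrunc_eq (h : PhiTrunc d K a x = PhiTrunc d K a y) :
    ‖x - y‖ ≤ 1 / 2 ^ K := by
  refine norm_sub_le_of_interleavedDigit_eq ha hx hy fun m hm => not_not.1 fun hm' => ?_
  obtain ⟨n, hn, hne, hlt⟩ := exists_lt_first_ne ⟨m, hm, hm'⟩
  have := one_div_three_pow_le_abs_PhiTrunc_sub ha hx hy hn hlt hne
  rw [h, sub_self, abs_zero] at this
  exact (not_le.2 (by positivity)) this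

lemma norm_sub_le_of_PhiTrunc_ne (h : PhiTrunc d K a x ≠ PhiTrunc d K a y) :
    ‖x - y‖ ≤ 2 * |PhiTrunc d K a x - PhiTrunc d K a y| ^ (Real.log 2 / (d * Real.log 3)) := by
  have hdiff : ∃ m < d * K, interleavedDigit d a x m ≠ interleavedDigit d a y m := by
    by_contra! hall
    rw [PhiTrunc_eq_sum_interleavedDigit, PhiTrunc_eq_sum_interleavedDigit] at h
    exact h (Finset.sum_congr rfl fun m hm => by rw [hall m (Finset.mem_range.1 hm)])
  obtain ⟨n, hn, hne, hlt⟩ := exists_lt_first_ne hdiff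
  have hsep := one_div_three_pow_le_abs_PhiTrunc_sub ha hx hy hn hlt hne
  have hd : 0 < d := Nat.pos_of_neZero d
  calc ‖x - y‖ ≤ 1 / 2 ^ (n / d) :=
        norm_sub_le_of_interleavedDigit_eq ha hx hy fun m hm =>
          hlt m (hm.trans_le (Nat.mul_div_le n d))
    _ = 2 * (1 / 3 ^ (d * (n / d + 1)) : ℝ) ^ (Real.log 2 / (d * Real.log 3)) := by
        rw [one_div_three_pow_rpow d _ hd.ne', pow_succ]; field_simp
    _ ≤ 2 * (1 / 3 ^ (n + 1) : ℝ) ^ (Real.log 2 / (d * Real.log 3)) := by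
        gcongr
        · norm_num
        · exact Nat.lt_mul_div_succ n hd
    _ ≤ 2 * |PhiTrunc d K a x - PhiTrunc d K a y| ^ (Real.log 2 / (d * Real.log 3)) := by
        gcongr

end Digits

section HolderOnCube

variable {d K : ℕ} [NeZero d] {a : ℝ → ℕ → ℕ} {β Q : ℝ} {f : (Fin d → ℝ) → ℝ} {x y : Fin d → ℝ}
  (ha : IsBinaryExp a) (hβ : 0 ≤ β) (hQ : 0 ≤ Q)
  (hf : ∀ x ∈ cube d, ∀ y ∈ cube d, |f x - f y| ≤ Q * ‖x - y‖ ^ β)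
  (hx : x ∈ cube d) (hy : y ∈ cube d)
include ha hβ hQ hf hx hy

lemma abs_sub_le_of_PhiTrunc_ne (h : PhiTrunc d K a x ≠ PhiTrunc d K a y) :
    |f x - f y| ≤ 2 ^ β * Q *
      |PhiTrunc d K a x - PhiTrunc d K a y| ^ (Real.log 2 / (d * Real.log 3) * β) := by
  calc |f x - f y| ≤ Q * ‖x - y‖ ^ β := hf x hx y hy
    _ ≤ Q * (2 * |PhiTrunc d K a x - PhiTrunc d K a y| ^ (Real.log 2 / (d * Real.log 3))) ^ β := by
        gcongr; exact norm_sub_le_of_PhiTrunc_ne ha hx hy h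
    _ = 2 ^ β * Q *
          |PhiTrunc d K a x - PhiTrunc d K a y| ^ (Real.log 2 / (d * Real.log 3) * β) := by
        rw [Real.mul_rpow zero_le_two (by positivity), ← Real.rpow_mul (abs_nonneg _)]; ring

lemma abs_sub_le_of_PhiTrunc_eq (h : PhiTrunc d K a x = PhiTrunc d K a y) :
    |f x - f y| ≤ Q * 2 ^ (-(β * K)) := by
  calc |f x - f y| ≤ Q * ‖x - y‖ ^ β := hf x hx y hy
    _ ≤ Q * (1 / 2 ^ K) ^ β := by gcongr; exact norm_sub_le_of_PhiTrunc_eq ha hx hy h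
    _ = Q * 2 ^ (-(β * K)) := by
        rw [one_div, ← Real.rpow_natCast, ← Real.rpow_neg zero_le_two, ← Real.rpow_mul zero_le_two]
        ring_nf

end HolderOnCube

lemma log_two_div_mul_log_three_le_one {d : ℕ} (hd : 1 ≤ d) :
    Real.log 2 / (d * Real.log 3) ≤ 1 := by
  rw [div_le_one (by positivity)]
  have : (1 : ℝ) ≤ d := by exact_mod_cast hd
  nlinarith [Real.log_le_log (by norm_num : (0 : ℝ) < 2) (by norm_num : (2 : ℝ) ≤ 3),
    Real.log_pos (by norm_num : (1 : ℝ) < 3)]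

theorem stmt12 (d K : ℕ) (hd : 2 ≤ d) (β Q : ℝ)
    (hβ0 : 0 < β) (hβ1 : β ≤ 1) (hQ : 0 < Q)
    (a : ℝ → ℕ → ℕ) (ha : IsBinaryExp a) (f : (Fin d → ℝ) → ℝ)
    (hf : ∀ x ∈ cube d, ∀ y ∈ cube d, |f x - f y| ≤ Q * ‖x - y‖ ^ β) :
    ∃ g : ℝ → ℝ,
      (∀ u ∈ CantorSet, ∀ v ∈ CantorSet,
        |g u - g v| ≤ 2 ^ β * Q * |u - v| ^ (β * Real.log 2 / (d * Real.log 3))) ∧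
      ∀ x ∈ cube d,
        |f x - g (∑ p : Fin d, phiTrunc d K a (x p) / 3 ^ ((p : ℕ) + 1))|
          ≤ Q * 2 ^ (-(β * ((K : ℝ) - 4))) := by
  have : NeZero d := ⟨by omega⟩
  have hexp : β * Real.log 2 / (d * Real.log 3) = Real.log 2 / (d * Real.log 3) * β := by ring
  obtain ⟨g, hg, hfg⟩ := exists_holder_agreeing_on_fibers (C := 2 ^ β * Q) (by positivity)
    (by positivity) (mul_le_one₀ (log_two_div_mul_log_three_le_one (by omega)) hβ0.le hβ1)
    (PhiTrunc d K a) f (cube d) fun x hx y hy hne => by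
      simpa only [Real.dist_eq] using abs_sub_le_of_PhiTrunc_ne ha hβ0.le hQ.le hf hx hy hne
  refine ⟨g, fun u _ v _ => by simpa only [hexp, Real.dist_eq] using hg u v, fun x hx => ?_⟩
  obtain ⟨y, hy, hxy, hgx⟩ := hfg x hx
  change |f x - g (PhiTrunc d K a x)| ≤ _
  rw [hgx]
  calc |f x - f y| ≤ Q * 2 ^ (-(β * K)) :=
        abs_sub_le_of_PhiTrunc_eq ha hβ0.le hQ.le hf hx hy hxy.symm
    _ ≤ Q * 2 ^ (-(β * ((K : ℝ) - 4))) := by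
        gcongr
        · norm_num
        · linarith

end
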